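/- arXiv:1904.04316 — 7 statements merged into one kernel-verified Lean document; each statement's English description precedes it below -/
import Mathlib

section
/- Let A and B be 2×2 Hermitian matrices with negative determinant representing circles in C∞. If z ∈ C (with a·|z|² + conj(b)·z + b·conj(z) + c = 0 for B = [[a,conj(b)],[b,c]]) lies on circle B and w is the image of z under reflection in circle A (i.e. for A = [[a',conj(b')],[b',c']], w = -(b'·conj(z)+c')/(a'·conj(z)+conj(b')), assuming a'·conj(z)+conj(b') ≠ 0), then w lies on the circle represented by the matrix A·B⁻¹·A. -/
/-!
Since `B⁻¹ = (det B)⁻¹ • adj B`, it suffices to show that the circle equation of `A * adj B * A`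
vanishes at the reflection `w` of `z`. Clearing the denominator `d = a' z̄ + b̄'` of `w`, that equation
at `w`, multiplied by `|d|²`, is the polynomial identity `(det A)² · (equation of B at z)`.
-/

open Matrix Complex
open ComplexConjugate

def hermitianFinTwo (a : ℝ) (b : ℂ) (c : ℝ) : Matrix (Fin 2) (Fin 2) ℂ :=
  !![(a : ℂ), conj b; b, (c : ℂ)]

def circleForm (M : Matrix (Fin 2) (Fin 2) ℂ) (z : ℂ) : ℂ :=
  M 0 0 * z * conj z + M 0 1 * z + M 1 0 * conj z + M 1 1

theorem circleForm_smul (r : ℂ) (M : Matrix (Fin 2) (Fin 2) ℂ) (z : ℂ) :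
    circleForm (r • M) z = r * circleForm M z := by
  simp only [circleForm, Matrix.smul_apply, smul_eq_mul]
  ring

theorem Matrix.mul_inv_mul_eq_smul_mul_adjugate_mul {n K : Type*} [Fintype n] [DecidableEq n]
    [Field K] (A B : Matrix n n K) : A * B⁻¹ * A = B.det⁻¹ • (A * B.adjugate * A) := by
  rw [inv_def, Ring.inverse_eq_inv', Matrix.mul_smul, Matrix.smul_mul]

theorem circleForm_mul_adjugate_mul_reflection (a c a' c' : ℝ) (b b' z : ℂ)
    (hden : (a' : ℂ) * conj z + conj b' ≠ 0) :
    circleForm (hermitianFinTwo a' b' c' * adjugate (hermitianFinTwo a b c) *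
        hermitianFinTwo a' b' c') (-(b' * conj z + c') / (a' * conj z + conj b')) *
      ((a' * conj z + conj b') * (a' * z + b')) =
      (hermitianFinTwo a' b' c').det ^ 2 * circleForm (hermitianFinTwo a b c) z := by
  have hden' : (a' : ℂ) * z + b' ≠ 0 := fun h => hden (by simpa using congrArg conj h)
  have hconj : conj (-(b' * conj z + c') / (a' * conj z + conj b')) =
      -(conj b' * z + c') / (a' * z + b') := by simp [map_div₀]
  rw [circleForm, circleForm, hconj]
  simp only [hermitianFinTwo, adjugate_fin_two_of, mul_fin_two, det_fin_two_of, of_apply,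
    cons_val', cons_val_zero, cons_val_one, empty_val', cons_val_fin_one]
  field_simp
  ring

theorem circleForm_mul_inv_mul_reflection_eq_zero (a c a' c' : ℝ) (b b' z : ℂ)
    (hz : circleForm (hermitianFinTwo a b c) z = 0) (hden : (a' : ℂ) * conj z + conj b' ≠ 0) :
    circleForm (hermitianFinTwo a' b' c' * (hermitianFinTwo a b c)⁻¹ * hermitianFinTwo a' b' c')
      (-(b' * conj z + c') / (a' * conj z + conj b')) = 0 := by
  have hden' : (a' : ℂ) * z + b' ≠ 0 := fun h => hden (by simpa using congrArg conj h)
  have key := circleForm_mul_adjugate_mul_reflection a c a' c' b b' z hden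
  rw [hz, mul_zero, mul_eq_zero, or_iff_left (mul_ne_zero hden hden')] at key
  rw [Matrix.mul_inv_mul_eq_smul_mul_adjugate_mul, circleForm_smul, key, mul_zero]

theorem stmt1_general (a c a' c' : ℝ) (b b' : ℂ)
    (A : Matrix (Fin 2) (Fin 2) ℂ) (B : Matrix (Fin 2) (Fin 2) ℂ)
    (hA : A = !![(a' : ℂ), (starRingEnd ℂ) b'; b', (c' : ℂ)])
    (hB : B = !![(a : ℂ), (starRingEnd ℂ) b; b, (c : ℂ)])
    (z w : ℂ)
    (hz : (a : ℂ) * z * (starRingEnd ℂ) z + (starRingEnd ℂ) b * z + b * (starRingEnd ℂ) z + (c : ℂ) = 0)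
    (hden : (a' : ℂ) * (starRingEnd ℂ) z + (starRingEnd ℂ) b' ≠ 0)
    (hw : w = -(b' * (starRingEnd ℂ) z + (c' : ℂ)) / ((a' : ℂ) * (starRingEnd ℂ) z + (starRingEnd ℂ) b')) :
    (A * B⁻¹ * A) 0 0 * w * (starRingEnd ℂ) w + (A * B⁻¹ * A) 0 1 * w +
      (A * B⁻¹ * A) 1 0 * (starRingEnd ℂ) w + (A * B⁻¹ * A) 1 1 = 0 := by
  subst hA hB hw
  exact circleForm_mul_inv_mul_reflection_eq_zero a c a' c' b b' z hz hden

theorem stmt1 (a c a' c' : ℝ) (b b' : ℂ)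
    (A : Matrix (Fin 2) (Fin 2) ℂ) (B : Matrix (Fin 2) (Fin 2) ℂ)
    (hA : A = !![(a' : ℂ), (starRingEnd ℂ) b'; b', (c' : ℂ)])
    (hB : B = !![(a : ℂ), (starRingEnd ℂ) b; b, (c : ℂ)])
    (hdA : (A.det.re : ℝ) < 0) (hdB : (B.det.re : ℝ) < 0)
    (z w : ℂ)
    (hz : (a : ℂ) * z * (starRingEnd ℂ) z + (starRingEnd ℂ) b * z + b * (starRingEnd ℂ) z + (c : ℂ) = 0)
    (hden : (a' : ℂ) * (starRingEnd ℂ) z + (starRingEnd ℂ) b' ≠ 0)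
    (hw : w = -(b' * (starRingEnd ℂ) z + (c' : ℂ)) / ((a' : ℂ) * (starRingEnd ℂ) z + (starRingEnd ℂ) b')) :
    (A * B⁻¹ * A) 0 0 * w * (starRingEnd ℂ) w + (A * B⁻¹ * A) 0 1 * w +
      (A * B⁻¹ * A) 1 0 * (starRingEnd ℂ) w + (A * B⁻¹ * A) 1 1 = 0 :=
  stmt1_general a c a' c' b b' A B hA hB z w hz hden hw
end

section
/- Fix real numbers α, θ. Define for each natural number k the 2×2 matrix M_k = [[-sin(α+(k-1)θ), sin((k-1)θ)],[sin((k-1)θ), sin(α-(k-1)θ)]]. Then for all k ≥ 2, M_{k-1} · M_{k-2}⁻¹ · M_{k-1} is a real scalar multiple of M_k (where the matrices are invertible). -/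
open Real Matrix

/-!
Write `s = sin α`. Then `M_k = P * E((k - 1) θ)` with `P = diag(-1, 1)` and
`E(t) = s cos t + sin t • J`, where `J = [[cos α, -1], [1, -cos α]]` satisfies `J² = -s²`.
So `E` behaves like a rotation scaled by `s`: `E(a) E(b) = s E(a + b)` and `adj E(t) = E(-t)`.
Together with `P² = 1` and `adj P = -P` this gives `M(t) adj M(u) M(t) = -s² M(2t - u)`,
while `det M(u) = -s²`. Hence `M_{k-1} M_{k-2}⁻¹ M_{k-1} = M_k`, i.e. `λ = 1`.
-/

noncomputable section

/-- `M_k = sinMatrix α ((k - 1) * θ)`. -/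
def sinMatrix (α t : ℝ) : Matrix (Fin 2) (Fin 2) ℝ :=
  !![-sin (α + t), sin t; sin t, sin (α - t)]

namespace sinMatrix

def reflection : Matrix (Fin 2) (Fin 2) ℝ := !![-1, 0; 0, 1]

def generator (α : ℝ) : Matrix (Fin 2) (Fin 2) ℝ := !![cos α, -1; 1, -cos α]

def rotation (α t : ℝ) : Matrix (Fin 2) (Fin 2) ℝ :=
  (sin α * cos t) • 1 + sin t • generator α

lemma reflection_mul_self : reflection * reflection = 1 := by
  simp [reflection, Matrix.one_fin_two]

lemma adjugate_reflection : reflection.adjugate = -reflection := by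
  simp [reflection, adjugate_fin_two_of]

lemma generator_mul_self (α : ℝ) : generator α * generator α = -(sin α ^ 2) • 1 := by
  have h := sin_sq_add_cos_sq α
  ext i j; fin_cases i <;> fin_cases j <;> simp [generator] <;> linarith

lemma rotation_mul_rotation (α a b : ℝ) :
    rotation α a * rotation α b = sin α • rotation α (a + b) := by
  simp only [rotation, add_mul, mul_add, smul_mul_smul, Matrix.one_mul, Matrix.mul_one,
    generator_mul_self, cos_add, sin_add]
  module

lemma adjugate_rotation (α t : ℝ) : (rotation α t).adjugate = rotation α (-t) := by
  simp [rotation, generator, adjugate_fin_two, Matrix.one_fin_two]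

lemma eq_reflection_mul_rotation (α t : ℝ) : sinMatrix α t = reflection * rotation α t := by
  ext i j; fin_cases i <;> fin_cases j <;>
    simp [sinMatrix, reflection, rotation, generator, sin_add, sin_sub, Matrix.one_fin_two] <;>
    ring

end sinMatrix

open sinMatrix in
lemma sinMatrix_mul_adjugate_mul (α t u : ℝ) :
    sinMatrix α t * (sinMatrix α u).adjugate * sinMatrix α t =
      -(sin α ^ 2) • sinMatrix α (2 * t - u) := by
  have : rotation α t * rotation α (-u) * rotation α t = sin α ^ 2 • rotation α (2 * t - u) := by
    rw [rotation_mul_rotation, Matrix.smul_mul, rotation_mul_rotation, smul_smul]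
    ring_nf
  simp only [eq_reflection_mul_rotation, adjugate_mul_distrib, adjugate_rotation,
    adjugate_reflection, Matrix.mul_assoc, mul_neg, neg_mul, ← Matrix.mul_assoc reflection reflection,
    reflection_mul_self, Matrix.one_mul]
  rw [← Matrix.mul_assoc (rotation α t), this, Matrix.mul_smul, neg_smul]

lemma det_sinMatrix (α t : ℝ) : (sinMatrix α t).det = -(sin α ^ 2) := by
  rw [sinMatrix, det_fin_two_of, sin_add, sin_sub]
  linear_combination (sin t ^ 2) * sin_sq_add_cos_sq α - sin α ^ 2 * sin_sq_add_cos_sq t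

lemma sinMatrix_mul_inv_mul (α t θ : ℝ) (h : sin α ≠ 0) :
    sinMatrix α t * (sinMatrix α (t - θ))⁻¹ * sinMatrix α t = sinMatrix α (t + θ) := by
  rw [inv_def, det_sinMatrix, Ring.inverse_eq_inv', Matrix.mul_smul, Matrix.smul_mul,
    sinMatrix_mul_adjugate_mul, smul_smul, inv_mul_cancel₀ (by simpa using h), one_smul,
    show 2 * t - (t - θ) = t + θ by ring]

end

theorem stmt3 (α θ : ℝ)
    (M : ℕ → Matrix (Fin 2) (Fin 2) ℝ)
    (hM : ∀ k : ℕ, M k = !![-sin (α + ((k : ℝ) - 1) * θ), sin (((k : ℝ) - 1) * θ);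
                            sin (((k : ℝ) - 1) * θ), sin (α - ((k : ℝ) - 1) * θ)])
    (k : ℕ) (hk : 2 ≤ k) (hinv : (M (k - 2)).det ≠ 0) :
    ∃ lam : ℝ, lam ≠ 0 ∧ M (k - 1) * (M (k - 2))⁻¹ * M (k - 1) = lam • M k := by
  have hM' (j : ℕ) : M j = sinMatrix α (((j : ℝ) - 1) * θ) := hM j
  obtain ⟨n, rfl⟩ := Nat.exists_eq_add_of_le' hk
  have hsin : sin α ≠ 0 := by
    rw [hM', det_sinMatrix] at hinv
    simpa using hinv
  refine ⟨1, one_ne_zero, ?_⟩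
  show M (n + 1) * (M n)⁻¹ * M (n + 1) = 1 • M (n + 2)
  have e0 : ((n : ℝ) - 1) * θ = n * θ - θ := by ring
  have e1 : (((n + 1 : ℕ) : ℝ) - 1) * θ = n * θ := by push_cast; ring
  have e2 : (((n + 2 : ℕ) : ℝ) - 1) * θ = n * θ + θ := by push_cast; ring
  rw [one_smul, hM', hM', hM', e0, e1, e2]
  exact sinMatrix_mul_inv_mul α (n * θ) θ hsin
end

section
/- Let n be a positive integer, θ = π/n, α real with 0 < α < π, and z a complex number with |z|²·sin(α-θ) + z·sinθ + conj(z)·sinθ - sin(α+θ) = 0 (and assume all denominators below are nonzero). Then ∏_{k=0}^{n-1} |z·sin(kθ) - sin(α+kθ)| / |conj(z)·sin(α+kθ) - sin(kθ)| = 1. -/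
/-!
Put `w = z sin(α - θ) + sin θ`. The arc equation says exactly `z̄ w = sin(α + θ) - z sin θ`, from
which `|w| = sin α` and, by two addition-formula identities,
`(z̄ sin(α + x) - sin x) w = -sin α (z sin(x + θ) - sin(α + x + θ))`.
So the `k`-th denominator has the same modulus as the `(k+1)`-st numerator, the product
telescopes to the ratio of the moduli of the numerators at `x = 0` and `x = nθ = π`, and these are
`|-sin α|` and `|sin α|`.
-/

open Real ComplexConjugate

lemma Finset.prod_range_div_of_ne_zero {G₀ : Type*} [CommGroupWithZero G₀] (f : ℕ → G₀) {n : ℕ}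
    (hf : ∀ k ≤ n, f k ≠ 0) :
    ∏ i ∈ range n, f i / f (i + 1) = f 0 / f n := by
  induction n with
  | zero => simp [hf 0 le_rfl]
  | succ n ih =>
    rw [prod_range_succ, ih fun k hk ↦ hf k (by omega), div_mul_div_cancel₀ (hf n (by omega))]

namespace Real

lemma sin_mul_sin_add_add_sin_sub_mul_sin (α θ x : ℝ) :
    sin θ * sin (α + x) + sin (α - θ) * sin x = sin α * sin (x + θ) := by
  simp only [sin_add, sin_sub]
  ring

lemma sin_add_mul_sin_add_sub_sin_mul_sin (α θ x : ℝ) :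
    sin (α + θ) * sin (α + x) - sin θ * sin x = sin α * sin (α + (x + θ)) := by
  simp only [sin_add, cos_add]
  linear_combination (sin θ * sin x) * sin_sq_add_cos_sq α

lemma sin_sub_mul_sin_add_add_sin_sq (α θ : ℝ) :
    sin (α - θ) * sin (α + θ) + sin θ ^ 2 = sin α ^ 2 := by
  have h := sin_add_mul_sin_add_sub_sin_mul_sin α θ (-θ)
  rw [neg_add_cancel, add_zero, sin_neg, ← sub_eq_add_neg] at h
  linear_combination h

end Real

/-- The arc `C₀` of Hermitian matrix `[[sin(α - θ), sin θ], [sin θ, -sin(α + θ)]]`. -/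
def OnArc (α θ : ℝ) (z : ℂ) : Prop :=
  (Complex.normSq z : ℂ) * (sin (α - θ) : ℂ) + z * (sin θ : ℂ) + conj z * (sin θ : ℂ) -
    (sin (α + θ) : ℂ) = 0

namespace OnArc

variable {α θ : ℝ} {z : ℂ}

lemma conj_mul_eq (hz : OnArc α θ z) :
    conj z * (z * (sin (α - θ) : ℂ) + (sin θ : ℂ)) = (sin (α + θ) : ℂ) - z * (sin θ : ℂ) := by
  rw [OnArc, ← Complex.mul_conj] at hz
  linear_combination hz

lemma norm_mul_sin_sub_add_sin (hz : OnArc α θ z) :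
    ‖z * (sin (α - θ) : ℂ) + (sin θ : ℂ)‖ = |sin α| := by
  set w := z * (sin (α - θ) : ℂ) + (sin θ : ℂ)
  have hw : w * conj w = (sin α : ℂ) ^ 2 := by
    have h := congrArg ((↑) : ℝ → ℂ) (sin_sub_mul_sin_add_add_sin_sq α θ)
    simp only [Complex.ofReal_add, Complex.ofReal_mul, Complex.ofReal_pow] at h
    simp only [w, map_add, map_mul, Complex.conj_ofReal]
    linear_combination (sin (α - θ) : ℂ) * hz.conj_mul_eq + h
  rw [Complex.mul_conj, ← Complex.ofReal_pow, Complex.ofReal_inj] at hw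
  rw [← sqrt_sq_eq_abs, ← hw, Complex.norm_def]

lemma conj_mul_sin_add_sub_sin_mul (hz : OnArc α θ z) (x : ℝ) :
    (conj z * (sin (α + x) : ℂ) - (sin x : ℂ)) * (z * (sin (α - θ) : ℂ) + (sin θ : ℂ)) =
      -(sin α : ℂ) * (z * (sin (x + θ) : ℂ) - (sin (α + (x + θ)) : ℂ)) := by
  have h₁ := congrArg ((↑) : ℝ → ℂ) (sin_mul_sin_add_add_sin_sub_mul_sin α θ x)
  have h₂ := congrArg ((↑) : ℝ → ℂ) (sin_add_mul_sin_add_sub_sin_mul_sin α θ x)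
  simp only [Complex.ofReal_add, Complex.ofReal_sub, Complex.ofReal_mul] at h₁ h₂
  linear_combination (sin (α + x) : ℂ) * hz.conj_mul_eq - z * h₁ + h₂

lemma norm_conj_mul_sin_add_sub_sin (hz : OnArc α θ z) (hα : sin α ≠ 0) (x : ℝ) :
    ‖conj z * (sin (α + x) : ℂ) - (sin x : ℂ)‖ =
      ‖z * (sin (x + θ) : ℂ) - (sin (α + (x + θ)) : ℂ)‖ := by
  have h := congrArg norm (hz.conj_mul_sin_add_sub_sin_mul x)
  rw [norm_mul, norm_mul, hz.norm_mul_sin_sub_add_sin, norm_neg, Complex.norm_real,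
    norm_eq_abs, mul_comm] at h
  exact mul_left_cancel₀ (abs_ne_zero.mpr hα) h

end OnArc

theorem stmt6 (n : ℕ) (hn : 0 < n) (θ α : ℝ) (hθ : θ = Real.pi / n)
    (hα : 0 < α ∧ α < Real.pi) (z : ℂ)
    (hz : (Complex.normSq z : ℂ) * (Real.sin (α - θ) : ℂ) + z * (Real.sin θ : ℂ) +
          (starRingEnd ℂ) z * (Real.sin θ : ℂ) - (Real.sin (α + θ) : ℂ) = 0)
    (hden : ∀ k < n, (starRingEnd ℂ) z * (Real.sin (α + k * θ) : ℂ) - (Real.sin (k * θ) : ℂ) ≠ 0) :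
    ∏ k ∈ Finset.range n,
      ‖z * (Real.sin (k * θ) : ℂ) - (Real.sin (α + k * θ) : ℂ)‖ /
        ‖(starRingEnd ℂ) z * (Real.sin (α + k * θ) : ℂ) - (Real.sin (k * θ) : ℂ)‖ = 1 := by
  set N : ℕ → ℝ := fun k ↦ ‖z * (sin (k * θ) : ℂ) - (sin (α + k * θ) : ℂ)‖
  have hsin : sin α ≠ 0 := (sin_pos_of_pos_of_lt_pi hα.1 hα.2).ne'
  have hden_eq (k : ℕ) :
      ‖conj z * (sin (α + k * θ) : ℂ) - (sin (k * θ) : ℂ)‖ = N (k + 1) := by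
    rw [OnArc.norm_conj_mul_sin_add_sub_sin hz hsin]
    simp only [N, Nat.cast_succ, add_one_mul]
  have hN₀ : N 0 = |sin α| := by simp [N, -Complex.ofReal_sin]
  have hNn : N n = |sin α| := by
    have hnθ : (n : ℝ) * θ = π := by rw [hθ]; field_simp
    simp [N, hnθ, sin_add_pi, -Complex.ofReal_sin]
  have hN_ne_zero : ∀ k ≤ n, N k ≠ 0
    | 0, _ => hN₀ ▸ abs_ne_zero.mpr hsin
    | k + 1, hk => hden_eq k ▸ norm_ne_zero_iff.mpr (hden k hk)
  calc _ = ∏ k ∈ Finset.range n, N k / N (k + 1) := by simp only [hden_eq, N]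
    _ = N 0 / N n := Finset.prod_range_div_of_ne_zero N hN_ne_zero
    _ = 1 := by rw [hN₀, hNn, div_self (abs_ne_zero.mpr hsin)]
end

section
/- Let n be a positive integer, θ = π/n, α real with 0 < α < π. For z, ζ complex with z·ζ·sin(kθ) + z·sin(α-kθ) - ζ·sin(α+kθ) + sin(kθ) ≠ 0 for all 0 ≤ k ≤ n-1, the function F(z,ζ) = ∏_{k=0}^{n-1} (conj(z)·ζ·sin(α+kθ) - (conj(z)+ζ)·sin(kθ) - sin(α-kθ))·(z·sin(kθ) - sin(α+kθ)) / [(z·ζ·sin(kθ) + z·sin(α-kθ) - ζ·sin(α+kθ) + sin(kθ))·(conj(z)·sin(α+kθ) - sin(kθ))] satisfies |F(z,ζ)| = 1 whenever z lies on either boundary arc: |z| = 1, or |z|²·sin(α-θ) + 2Re(z)·sinθ - sin(α+θ) = 0. -/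
/-!
Write `w = conj z` and `s = Real.sin`. Both boundary arcs are zero sets of
`D_t(z, w) = z w s(α - t) + (z + w) s t - s(α + t)`: the unit circle is `D_0 = (|z|² - 1) s α = 0`
and the second arc is `D_θ = 0`. Writing the `k`-th factor as `(p b) / (q a)` at `x = kθ`, the
trigonometric identity `p(x) b(x + t) - q(x + t) a(x) = -s α · D_t(z, w)` makes every factor `1`
on the unit circle, while on the second arc the product telescopes: `b` and `q` are antiperiodic
in `x` with period `nθ = π`, so shifting their products by one index changes both by the same sign.
In both cases the product is exactly `1`.
-/

open Finset

noncomputable section ReflectionFactors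

variable (α : ℝ)

/-! `p, a, q, b` are `oddNum, oddDen, evenNum, evenDen`: at `x = kθ` and `w = conj z`,
`ζ - z_{2k+1} = oddNum / oddDen` and `ζ - z_{2k} = evenNum / evenDen`; `D_t` is `arcDefect t`. -/

def oddNum (w ζ : ℂ) (x : ℝ) : ℂ :=
  w * ζ * (Real.sin (α + x) : ℂ) - (w + ζ) * (Real.sin x : ℂ) - (Real.sin (α - x) : ℂ)

def oddDen (w : ℂ) (x : ℝ) : ℂ :=
  w * (Real.sin (α + x) : ℂ) - (Real.sin x : ℂ)

def evenNum (z ζ : ℂ) (x : ℝ) : ℂ :=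
  z * ζ * (Real.sin x : ℂ) + z * (Real.sin (α - x) : ℂ) - ζ * (Real.sin (α + x) : ℂ) +
    (Real.sin x : ℂ)

def evenDen (z : ℂ) (x : ℝ) : ℂ :=
  z * (Real.sin x : ℂ) - (Real.sin (α + x) : ℂ)

def arcDefect (t : ℝ) (z w : ℂ) : ℂ :=
  z * w * (Real.sin (α - t) : ℂ) + (z + w) * (Real.sin t : ℂ) - (Real.sin (α + t) : ℂ)

variable {α}

theorem oddNum_mul_evenDen_add (t x : ℝ) (z w ζ : ℂ) :
    oddNum α w ζ x * evenDen α z (x + t) =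
      evenNum α z ζ (x + t) * oddDen α w x - (Real.sin α : ℂ) * arcDefect α t z w := by
  have hx : (Real.sin x : ℂ) ^ 2 + (Real.cos x : ℂ) ^ 2 = 1 := by
    exact_mod_cast Real.sin_sq_add_cos_sq x
  have hα : (Real.sin α : ℂ) ^ 2 + (Real.cos α : ℂ) ^ 2 = 1 := by
    exact_mod_cast Real.sin_sq_add_cos_sq α
  simp only [oddNum, evenDen, evenNum, oddDen, arcDefect, Real.sin_add, Real.sin_sub,
    Real.cos_add, Complex.ofReal_add, Complex.ofReal_sub, Complex.ofReal_mul]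
  linear_combination
    ((Real.sin α : ℂ) * (-(Real.sin t : ℂ) * w - (Real.sin t : ℂ) * z +
      (Real.cos α : ℂ) * (Real.sin t : ℂ) + (Real.cos α : ℂ) * (Real.sin t : ℂ) * z * w +
      (Real.sin α : ℂ) * (Real.cos t : ℂ) - (Real.sin α : ℂ) * (Real.cos t : ℂ) * z * w)) * hx +
    ((z * w - 1) * ((Real.sin x : ℂ) * (Real.cos x : ℂ) * (Real.sin t : ℂ) +
      (Real.sin x : ℂ) ^ 2 * (Real.cos t : ℂ))) * hα

theorem oddNum_mul_evenDen_add_of_arcDefect_eq_zero {t : ℝ} {z w : ℂ}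
    (h : arcDefect α t z w = 0) (ζ : ℂ) (x : ℝ) :
    oddNum α w ζ x * evenDen α z (x + t) = evenNum α z ζ (x + t) * oddDen α w x := by
  rw [oddNum_mul_evenDen_add, h, mul_zero, sub_zero]

theorem arcDefect_zero_conj (z : ℂ) :
    arcDefect α 0 z (starRingEnd ℂ z) = ((‖z‖ ^ 2 - 1) * Real.sin α : ℝ) := by
  simp only [arcDefect, sub_zero, add_zero, Real.sin_zero, Complex.ofReal_zero, mul_zero,
    Complex.mul_conj, Complex.normSq_eq_norm_sq]
  push_cast
  ring

theorem arcDefect_conj (t : ℝ) (z : ℂ) :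
    arcDefect α t z (starRingEnd ℂ z) =
      (Complex.normSq z * Real.sin (α - t) + 2 * z.re * Real.sin t - Real.sin (α + t) : ℝ) := by
  simp only [arcDefect, Complex.mul_conj, Complex.add_conj]
  push_cast
  ring

theorem evenDen_add_pi (z : ℂ) (x : ℝ) : evenDen α z (x + Real.pi) = -evenDen α z x := by
  simp only [evenDen, ← add_assoc, Real.sin_add_pi]
  push_cast
  ring

theorem evenNum_add_pi (z ζ : ℂ) (x : ℝ) :
    evenNum α z ζ (x + Real.pi) = -evenNum α z ζ x := by
  simp only [evenNum, ← add_assoc, ← sub_sub, Real.sin_add_pi, Real.sin_sub_pi]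
  push_cast
  ring

theorem evenDen_zero (z : ℂ) : evenDen α z 0 = -(Real.sin α : ℂ) := by
  simp [evenDen]

end ReflectionFactors

theorem prod_range_mul_eq_of_shift {R : Type*} [CommRing R] [IsDomain R] {p a b q : ℕ → R}
    {n : ℕ} {c : R} (h : ∀ k < n, p k * b (k + 1) = q (k + 1) * a k)
    (hb : b n = c * b 0) (hq : q n = c * q 0) (hc : c ≠ 0) (hb0 : b 0 ≠ 0) (hq0 : q 0 ≠ 0) :
    (∏ k ∈ range n, p k) * ∏ k ∈ range n, b k = (∏ k ∈ range n, q k) * ∏ k ∈ range n, a k := by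
  have shift (f : ℕ → R) : (∏ k ∈ range n, f (k + 1)) * f 0 = (∏ k ∈ range n, f k) * f n := by
    rw [← prod_range_succ', prod_range_succ]
  have hprod : (∏ k ∈ range n, p k) * ∏ k ∈ range n, b (k + 1) =
      (∏ k ∈ range n, q (k + 1)) * ∏ k ∈ range n, a k := by
    rw [← prod_mul_distrib, ← prod_mul_distrib]
    exact prod_congr rfl fun k hk => h k (mem_range.mp hk)
  have hsb := shift b
  have hsq := shift q
  rw [hb] at hsb
  rw [hq] at hsq
  apply mul_right_cancel₀ (mul_ne_zero (mul_ne_zero hc hb0) hq0)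
  linear_combination (∏ k ∈ range n, a k) * b 0 * hsq - (∏ k ∈ range n, p k) * q 0 * hsb +
    b 0 * q 0 * hprod

theorem stmt11 (n : ℕ) (hn : 0 < n) (θ α : ℝ) (hθ : θ = Real.pi / n)
    (hα : 0 < α ∧ α < Real.pi) (z ζ : ℂ)
    (hden1 : ∀ k < n, z * ζ * (Real.sin (k * θ) : ℂ) + z * (Real.sin (α - k * θ) : ℂ) -
            ζ * (Real.sin (α + k * θ) : ℂ) + (Real.sin (k * θ) : ℂ) ≠ 0)
    (hden2 : ∀ k < n, (starRingEnd ℂ) z * (Real.sin (α + k * θ) : ℂ) - (Real.sin (k * θ) : ℂ) ≠ 0)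
    (hbd : ‖z‖ = 1 ∨
      Complex.normSq z * Real.sin (α - θ) + 2 * z.re * Real.sin θ - Real.sin (α + θ) = 0) :
    ‖(∏ k ∈ Finset.range n,
      (((starRingEnd ℂ) z * ζ * (Real.sin (α + k * θ) : ℂ) -
          ((starRingEnd ℂ) z + ζ) * (Real.sin (k * θ) : ℂ) - (Real.sin (α - k * θ) : ℂ)) *
        (z * (Real.sin (k * θ) : ℂ) - (Real.sin (α + k * θ) : ℂ))) /
      ((z * ζ * (Real.sin (k * θ) : ℂ) + z * (Real.sin (α - k * θ) : ℂ) -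
          ζ * (Real.sin (α + k * θ) : ℂ) + (Real.sin (k * θ) : ℂ)) *
        ((starRingEnd ℂ) z * (Real.sin (α + k * θ) : ℂ) - (Real.sin (k * θ) : ℂ))))‖ = 1 := by
  set w := starRingEnd ℂ z
  change ‖∏ k ∈ range n, oddNum α w ζ (k * θ) * evenDen α z (k * θ) /
    (evenNum α z ζ (k * θ) * oddDen α w (k * θ))‖ = 1
  have hden : ∏ k ∈ range n, evenNum α z ζ (k * θ) * oddDen α w (k * θ) ≠ 0 :=
    prod_ne_zero_iff.mpr fun k hk =>
      mul_ne_zero (hden1 k (mem_range.mp hk)) (hden2 k (mem_range.mp hk))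
  suffices ∏ k ∈ range n, oddNum α w ζ (k * θ) * evenDen α z (k * θ) =
      ∏ k ∈ range n, evenNum α z ζ (k * θ) * oddDen α w (k * θ) by
    rw [prod_div_distrib, this, div_self hden, norm_one]
  rcases hbd with hcircle | harc
  · have h0 : arcDefect α 0 z w = 0 := by simp [w, arcDefect_zero_conj, hcircle]
    exact prod_congr rfl fun k _ => by
      simpa using oddNum_mul_evenDen_add_of_arcDefect_eq_zero h0 ζ (k * θ)
  · have hθ' : arcDefect α θ z w = 0 := by simp [w, arcDefect_conj, harc]
    have hnθ : (n : ℝ) * θ = 0 + Real.pi := by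
      rw [hθ, zero_add]
      field_simp
    rw [prod_mul_distrib, prod_mul_distrib]
    refine prod_range_mul_eq_of_shift (c := -1) (fun k _ => ?_) ?_ ?_
      (neg_ne_zero.mpr one_ne_zero) ?_ (hden1 0 hn)
    · simpa [add_mul] using oddNum_mul_evenDen_add_of_arcDefect_eq_zero hθ' ζ (k * θ)
    · show evenDen α z (n * θ) = -1 * evenDen α z ((0 : ℕ) * θ)
      rw [hnθ, evenDen_add_pi, Nat.cast_zero, zero_mul, neg_one_mul]
    · show evenNum α z ζ (n * θ) = -1 * evenNum α z ζ ((0 : ℕ) * θ)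
      rw [hnθ, evenNum_add_pi, Nat.cast_zero, zero_mul, neg_one_mul]
    · show evenDen α z ((0 : ℕ) * θ) ≠ 0
      rw [Nat.cast_zero, zero_mul, evenDen_zero, neg_ne_zero, Complex.ofReal_ne_zero]
      exact (Real.sin_pos_of_pos_of_lt_pi hα.1 hα.2).ne'
end

section
/- Let α, θ be real with sinα ≠ 0, and let g₀(z,ζ) = log |(conj(z)·ζ·sin(α-θ) + conj(z)·sinθ + ζ·sinθ - sin(α+θ)) / ((z-ζ)·sinα)|². Then for z, ζ complex with |z|²·sin(α-θ) + z·sinθ + conj(z)·sinθ - sin(α+θ) = 0 (z on the boundary circle) and z ≠ ζ, g₀(z,ζ) = 0. -/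
/-!
On the boundary circle the numerator factors as `(ζ - z) * (conj z * sin (α - θ) + sin θ)`, and
the boundary equation together with `sin (α + θ) * sin (α - θ) = sin α ^ 2 - sin θ ^ 2` shows that
the second factor has modulus `|sin α|`. Numerator and denominator thus have the same modulus, so
the logarithm vanishes.
-/

open Complex ComplexConjugate

theorem Real.sin_add_mul_sin_sub (x y : ℝ) :
    Real.sin (x + y) * Real.sin (x - y) = Real.sin x ^ 2 - Real.sin y ^ 2 := by
  rw [Real.sin_add, Real.sin_sub]
  nlinarith [Real.sin_sq_add_cos_sq x, Real.sin_sq_add_cos_sq y]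

theorem log_norm_div_sq_eq_zero_of_norm_eq {𝕜 : Type*} [NormedDivisionRing 𝕜] {u v : 𝕜}
    (h : ‖u‖ = ‖v‖) :
    Real.log (‖u / v‖ ^ 2) = 0 := by
  rcases eq_or_ne v 0 with rfl | hv
  · simp
  · rw [norm_div, h, div_self (norm_ne_zero_iff.mpr hv)]
    simp

section Circle

variable {z : ℂ} {a t s : ℝ}
  (hz : (normSq z : ℂ) * a + z * t + conj z * t - s = 0)
include hz

theorem conj_mul_add_eq_sub_mul_of_circle (ζ : ℂ) :
    conj z * ζ * a + conj z * t + ζ * t - s = (ζ - z) * (conj z * a + t) := by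
  linear_combination hz + (a : ℂ) * mul_conj z

theorem normSq_conj_mul_add_of_circle : normSq (conj z * a + t) = a * s + t ^ 2 := by
  apply ofReal_injective
  rw [← mul_conj, map_add, map_mul, conj_conj, conj_ofReal, conj_ofReal]
  push_cast
  linear_combination (a : ℂ) * hz + (a : ℂ) ^ 2 * mul_conj z

end Circle

theorem stmt13_general (α θ : ℝ) (z ζ : ℂ)
    (hz : (Complex.normSq z : ℂ) * (Real.sin (α - θ) : ℂ) + z * (Real.sin θ : ℂ) +
          (starRingEnd ℂ) z * (Real.sin θ : ℂ) - (Real.sin (α + θ) : ℂ) = 0) :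
    Real.log (‖
      (((starRingEnd ℂ) z * ζ * (Real.sin (α - θ) : ℂ) + (starRingEnd ℂ) z * (Real.sin θ : ℂ) +
          ζ * (Real.sin θ : ℂ) - (Real.sin (α + θ) : ℂ)) /
        ((z - ζ) * (Real.sin α : ℂ)))‖ ^ 2) = 0 := by
  have hw : ‖conj z * Real.sin (α - θ) + Real.sin θ‖ = |Real.sin α| := by
    rw [← sq_eq_sq₀ (norm_nonneg _) (abs_nonneg _), sq_abs, ← normSq_eq_norm_sq,
      normSq_conj_mul_add_of_circle hz, mul_comm, Real.sin_add_mul_sin_sub]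
    ring
  apply log_norm_div_sq_eq_zero_of_norm_eq
  rw [conj_mul_add_eq_sub_mul_of_circle hz, norm_mul, norm_mul, hw, norm_sub_rev, norm_real,
    Real.norm_eq_abs]

theorem stmt13 (α θ : ℝ) (hα : Real.sin α ≠ 0) (z ζ : ℂ) (hzζ : z ≠ ζ)
    (hz : (Complex.normSq z : ℂ) * (Real.sin (α - θ) : ℂ) + z * (Real.sin θ : ℂ) +
          (starRingEnd ℂ) z * (Real.sin θ : ℂ) - (Real.sin (α + θ) : ℂ) = 0) :
    Real.log (‖
      (((starRingEnd ℂ) z * ζ * (Real.sin (α - θ) : ℂ) + (starRingEnd ℂ) z * (Real.sin θ : ℂ) +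
          ζ * (Real.sin θ : ℂ) - (Real.sin (α + θ) : ℂ)) /
        ((z - ζ) * (Real.sin α : ℂ)))‖ ^ 2) = 0 :=
  stmt13_general α θ z ζ hz
end

section
/- Let n be a positive integer, θ = π/n, α real, z, ζ complex with |z| = 1 and all the denominators z·ζ·sin(kθ) + z·sin(α-kθ) - ζ·sin(α+kθ) + sin(kθ) and z·conj(ζ)·sin(α+kθ) - (z+conj(ζ))·sin(kθ) - sin(α-kθ) nonzero for 0 ≤ k ≤ n-1. Then Re( z · ∑_{k=0}^{n-1} [ (ζ·sin(kθ)+sin(α-kθ))/(z·ζ·sin(kθ)+z·sin(α-kθ)-ζ·sin(α+kθ)+sin(kθ)) + (conj(ζ)·sin(α+kθ)-sin(kθ))/(z·conj(ζ)·sin(α+kθ)-(z+conj(ζ))·sin(kθ)-sin(α-kθ)) ] ) = n. -/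
/-! The identity holds summand by summand: each `z · (first + second)` has real part `1`.
Write `D₁, D₂` for the two denominators and `N = conj ζ · sin kθ + sin(α - kθ)`. Since
`z · conj z = 1`, one has `z · conj D₁ = -D₂`, hence `conj (z · first) = -N / D₂`, while
`z · second = 1 + N / D₂`; the real parts of `±N / D₂` cancel. -/

open ComplexConjugate

section UnitCircle

variable {z : ℂ} (ζ : ℂ) (s t u : ℝ)

lemma mul_conj_denom_eq_neg (hz : z * conj z = 1) :
    z * conj (z * ζ * s + z * u - ζ * t + s) = -(z * conj ζ * t - (z + conj ζ) * s - u) := by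
  simp only [map_add, map_sub, map_mul, Complex.conj_ofReal]
  linear_combination (conj ζ * s + u) * hz

lemma conj_mul_first_term (hz : z * conj z = 1) :
    conj (z * ((ζ * s + u) / (z * ζ * s + z * u - ζ * t + s))) =
      -((conj ζ * s + u) / (z * conj ζ * t - (z + conj ζ) * s - u)) := by
  have hconj : z * conj z * conj (ζ * s + u) = conj ζ * s + u := by
    rw [hz, one_mul]; simp only [map_add, map_mul, Complex.conj_ofReal]
  rw [map_mul, map_div₀, ← mul_div_assoc, ← mul_div_mul_left _ _ (left_ne_zero_of_mul_eq_one hz),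
    ← mul_assoc, hconj, mul_conj_denom_eq_neg ζ s t u hz, div_neg]

lemma mul_second_term (hD : z * conj ζ * t - (z + conj ζ) * s - u ≠ 0) :
    z * ((conj ζ * t - s) / (z * conj ζ * t - (z + conj ζ) * s - u)) =
      1 + (conj ζ * s + u) / (z * conj ζ * t - (z + conj ζ) * s - u) := by
  rw [← mul_div_assoc, one_add_div hD]
  congr 1
  ring

theorem re_mul_first_term_add_second_term (hz : ‖z‖ = 1)
    (hD : z * conj ζ * t - (z + conj ζ) * s - u ≠ 0) :
    (z * ((ζ * s + u) / (z * ζ * s + z * u - ζ * t + s) +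
      (conj ζ * t - s) / (z * conj ζ * t - (z + conj ζ) * s - u))).re = 1 := by
  have hz' : z * conj z = 1 := by rw [Complex.mul_conj', hz]; norm_num
  rw [mul_add, Complex.add_re, mul_second_term ζ s t u hD, ← Complex.conj_re,
    conj_mul_first_term ζ s t u hz', Complex.add_re, Complex.neg_re, Complex.one_re]
  ring

end UnitCircle

theorem stmt16_general (n : ℕ) (θ α : ℝ)
    (z ζ : ℂ) (hz : ‖z‖ = 1)
    (hden2 : ∀ k < n, z * (starRingEnd ℂ) ζ * (Real.sin (α + k * θ) : ℂ) -
            (z + (starRingEnd ℂ) ζ) * (Real.sin (k * θ) : ℂ) - (Real.sin (α - k * θ) : ℂ) ≠ 0) :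
    (z * ∑ k ∈ Finset.range n,
      ((ζ * (Real.sin (k * θ) : ℂ) + (Real.sin (α - k * θ) : ℂ)) /
        (z * ζ * (Real.sin (k * θ) : ℂ) + z * (Real.sin (α - k * θ) : ℂ) -
          ζ * (Real.sin (α + k * θ) : ℂ) + (Real.sin (k * θ) : ℂ)) +
       ((starRingEnd ℂ) ζ * (Real.sin (α + k * θ) : ℂ) - (Real.sin (k * θ) : ℂ)) /
        (z * (starRingEnd ℂ) ζ * (Real.sin (α + k * θ) : ℂ) -
          (z + (starRingEnd ℂ) ζ) * (Real.sin (k * θ) : ℂ) - (Real.sin (α - k * θ) : ℂ)))).re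
    = n := by
  rw [Finset.mul_sum, Complex.re_sum, Finset.sum_congr rfl fun k hk =>
    re_mul_first_term_add_second_term ζ _ _ _ hz (hden2 k (Finset.mem_range.mp hk))]
  simp

theorem stmt16 (n : ℕ) (hn : 0 < n) (θ α : ℝ) (hθ : θ = Real.pi / n)
    (z ζ : ℂ) (hz : ‖z‖ = 1)
    (hden1 : ∀ k < n, z * ζ * (Real.sin (k * θ) : ℂ) + z * (Real.sin (α - k * θ) : ℂ) -
            ζ * (Real.sin (α + k * θ) : ℂ) + (Real.sin (k * θ) : ℂ) ≠ 0)
    (hden2 : ∀ k < n, z * (starRingEnd ℂ) ζ * (Real.sin (α + k * θ) : ℂ) -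
            (z + (starRingEnd ℂ) ζ) * (Real.sin (k * θ) : ℂ) - (Real.sin (α - k * θ) : ℂ) ≠ 0) :
    (z * ∑ k ∈ Finset.range n,
      ((ζ * (Real.sin (k * θ) : ℂ) + (Real.sin (α - k * θ) : ℂ)) /
        (z * ζ * (Real.sin (k * θ) : ℂ) + z * (Real.sin (α - k * θ) : ℂ) -
          ζ * (Real.sin (α + k * θ) : ℂ) + (Real.sin (k * θ) : ℂ)) +
       ((starRingEnd ℂ) ζ * (Real.sin (α + k * θ) : ℂ) - (Real.sin (k * θ) : ℂ)) /
        (z * (starRingEnd ℂ) ζ * (Real.sin (α + k * θ) : ℂ) -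
          (z + (starRingEnd ℂ) ζ) * (Real.sin (k * θ) : ℂ) - (Real.sin (α - k * θ) : ℂ)))).re
    = n :=
  stmt16_general n θ α z ζ hz hden2
end

section
/- Let α, θ be real with sinα ≠ 0, and z, ζ complex with z·conj(ζ)·sin(α+kθ) - (z+conj(ζ))·sin(kθ) - sin(α-kθ) ≠ 0 and conj(z)·sin(α-θ) + sinθ ≠ 0. Substituting z = (-conj(w)·sinθ + sin(α+θ))/(conj(w)·sin(α-θ) + sinθ) (i.e. z is the reflection of w in the circle C₀), the identity (conj(ζ)·sin(α+kθ) - sin(kθ)) / (z·conj(ζ)·sin(α+kθ) - (z+conj(ζ))·sin(kθ) - sin(α-kθ)) = -((conj(w)·sin(α-θ)+sinθ)/sinα) · (conj(ζ)·sin(α+kθ) - sin(kθ)) / (conj(w)·conj(ζ)·sin((k+1)θ) + conj(w)·sin(α-(k+1)θ) - conj(ζ)·sin(α+(k+1)θ) + sin((k+1)θ)) holds. -/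
open Complex in
/-- Reflecting `v` in `C₀` shifts `k` to `k + 1` in the denominator, at the cost of the factor
`-sin α / (v sin (α - θ) + sin θ)`. After the addition formulas this is a polynomial identity
modulo `sin² α + cos² α = 1`. -/
theorem denom_at_reflection_mul_eq_neg_sin_mul_denom_succ (α θ k : ℝ) (v u z : ℂ)
    (hz : z * (v * (Real.sin (α - θ) : ℂ) + (Real.sin θ : ℂ)) =
      -v * (Real.sin θ : ℂ) + (Real.sin (α + θ) : ℂ)) :
    (z * u * (Real.sin (α + k * θ) : ℂ) - (z + u) * (Real.sin (k * θ) : ℂ) -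
        (Real.sin (α - k * θ) : ℂ)) * (v * (Real.sin (α - θ) : ℂ) + (Real.sin θ : ℂ)) =
      -(Real.sin α : ℂ) * (v * u * (Real.sin ((k + 1) * θ) : ℂ) +
        v * (Real.sin (α - (k + 1) * θ) : ℂ) - u * (Real.sin (α + (k + 1) * θ) : ℂ) +
        (Real.sin ((k + 1) * θ) : ℂ)) := by
  push_cast at hz ⊢
  simp only [add_mul, one_mul, sin_add, sin_sub, cos_add] at hz ⊢
  linear_combination (u * (sin α * cos (k * θ) + cos α * sin (k * θ)) - sin (k * θ)) * hz +
    (u - v) * sin θ * sin (k * θ) * sin_sq_add_cos_sq (α : ℂ)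

theorem div_eq_neg_div_mul_div_of_mul_eq {K : Type*} [Field K] {a b d s g : K} (hb : b ≠ 0)
    (hd : d ≠ 0) (h : b * d = -s * g) : a / b = -(d / s) * (a / g) := by
  have hsg : s * g ≠ 0 := by
    rw [← neg_ne_zero, ← neg_mul, ← h]
    exact mul_ne_zero hb hd
  rw [neg_mul, div_mul_div_comm, ← neg_div, div_eq_div_iff hb hsg]
  linear_combination a * h

theorem stmt18_general (α θ k : ℝ) (w z ζ : ℂ)
    (hC : (starRingEnd ℂ) w * (Real.sin (α - θ) : ℂ) + (Real.sin θ : ℂ) ≠ 0)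
    (hz : z = (-((starRingEnd ℂ) w) * (Real.sin θ : ℂ) + (Real.sin (α + θ) : ℂ)) /
              ((starRingEnd ℂ) w * (Real.sin (α - θ) : ℂ) + (Real.sin θ : ℂ)))
    (hden : z * (starRingEnd ℂ) ζ * (Real.sin (α + k * θ) : ℂ) -
            (z + (starRingEnd ℂ) ζ) * (Real.sin (k * θ) : ℂ) - (Real.sin (α - k * θ) : ℂ) ≠ 0) :
    ((starRingEnd ℂ) ζ * (Real.sin (α + k * θ) : ℂ) - (Real.sin (k * θ) : ℂ)) /
      (z * (starRingEnd ℂ) ζ * (Real.sin (α + k * θ) : ℂ) -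
        (z + (starRingEnd ℂ) ζ) * (Real.sin (k * θ) : ℂ) - (Real.sin (α - k * θ) : ℂ))
    = -(((starRingEnd ℂ) w * (Real.sin (α - θ) : ℂ) + (Real.sin θ : ℂ)) / (Real.sin α : ℂ)) *
      (((starRingEnd ℂ) ζ * (Real.sin (α + k * θ) : ℂ) - (Real.sin (k * θ) : ℂ)) /
        ((starRingEnd ℂ) w * (starRingEnd ℂ) ζ * (Real.sin ((k + 1) * θ) : ℂ) +
          (starRingEnd ℂ) w * (Real.sin (α - (k + 1) * θ) : ℂ) -
          (starRingEnd ℂ) ζ * (Real.sin (α + (k + 1) * θ) : ℂ) + (Real.sin ((k + 1) * θ) : ℂ))) :=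
  div_eq_neg_div_mul_div_of_mul_eq hden hC <|
    denom_at_reflection_mul_eq_neg_sin_mul_denom_succ α θ k _ _ z (by rw [hz, div_mul_cancel₀ _ hC])

theorem stmt18 (α θ k : ℝ) (hα : Real.sin α ≠ 0) (w z ζ : ℂ)
    (hC : (starRingEnd ℂ) w * (Real.sin (α - θ) : ℂ) + (Real.sin θ : ℂ) ≠ 0)
    (hz : z = (-((starRingEnd ℂ) w) * (Real.sin θ : ℂ) + (Real.sin (α + θ) : ℂ)) /
              ((starRingEnd ℂ) w * (Real.sin (α - θ) : ℂ) + (Real.sin θ : ℂ)))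
    (hden : z * (starRingEnd ℂ) ζ * (Real.sin (α + k * θ) : ℂ) -
            (z + (starRingEnd ℂ) ζ) * (Real.sin (k * θ) : ℂ) - (Real.sin (α - k * θ) : ℂ) ≠ 0) :
    ((starRingEnd ℂ) ζ * (Real.sin (α + k * θ) : ℂ) - (Real.sin (k * θ) : ℂ)) /
      (z * (starRingEnd ℂ) ζ * (Real.sin (α + k * θ) : ℂ) -
        (z + (starRingEnd ℂ) ζ) * (Real.sin (k * θ) : ℂ) - (Real.sin (α - k * θ) : ℂ))
    = -(((starRingEnd ℂ) w * (Real.sin (α - θ) : ℂ) + (Real.sin θ : ℂ)) / (Real.sin α : ℂ)) *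
      (((starRingEnd ℂ) ζ * (Real.sin (α + k * θ) : ℂ) - (Real.sin (k * θ) : ℂ)) /
        ((starRingEnd ℂ) w * (starRingEnd ℂ) ζ * (Real.sin ((k + 1) * θ) : ℂ) +
          (starRingEnd ℂ) w * (Real.sin (α - (k + 1) * θ) : ℂ) -
          (starRingEnd ℂ) ζ * (Real.sin (α + (k + 1) * θ) : ℂ) + (Real.sin ((k + 1) * θ) : ℂ))) :=
  stmt18_general α θ k w z ζ hC hz hden
end
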